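/- arXiv:2503.16900 — 6 statements merged into one kernel-verified Lean document; each statement's English description precedes it below -/
import Mathlib

section
/- Let 𝒫 be a transposed Poisson superalgebra over 𝕂. Then for all homogeneous x, y, z ∈ 𝒫: (-1)^{|x||z|} x·[y,z] + (-1)^{|x||y|} y·[z,x] + (-1)^{|y||z|} z·[x,y] = 0. -/
/-!
Apply the compatibility condition to each cyclic rotation of `(x, y, z)`. Rewriting its second
bracket with supercommutativity and superskewness gives
`2 (-1)^{|x||z|} x·[y,z] = T(x,y,z) - T(z,x,y)` with `T(x,y,z) = (-1)^{|x||z|} [x·y, z]`,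
so the cyclic sum of the left-hand sides telescopes to `0`, and `2` is invertible.
-/

/-- Sign function: `sgn K p = (-1)^p` for a parity `p : ZMod 2`. -/
def sgn (K : Type*) [Field K] : ZMod 2 → K := fun p => if p = 0 then 1 else -1

section Sign

variable (K : Type*) [Field K]

lemma sgn_add (u v : ZMod 2) : sgn K (u + v) = sgn K u * sgn K v := by
  have h01 : ∀ a : ZMod 2, a = 0 ∨ a = 1 := by decide
  rcases h01 u with rfl | rfl <;> rcases h01 v with rfl | rfl <;>
    simp [sgn, show (1 + 1 : ZMod 2) = 0 from rfl]

lemma sgn_mul_self (u : ZMod 2) : sgn K u * sgn K u = 1 := by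
  unfold sgn; split_ifs <;> norm_num

end Sign

section Superalgebra

variable {K : Type*} [Field K] {P : Type*} [AddCommGroup P] [Module K P]
  {H : ZMod 2 → Submodule K P} {m br : P →ₗ[K] P →ₗ[K] P}

lemma br_mul_eq_neg_sgn_smul_br_mul
    (hmH : ∀ (p q : ZMod 2) (x y : P), x ∈ H p → y ∈ H q → m x y ∈ H (p + q))
    (hcomm : ∀ (p q : ZMod 2) (x y : P), x ∈ H p → y ∈ H q →
      m x y = sgn K (p * q) • m y x)
    (hskew : ∀ (p q : ZMod 2) (x y : P), x ∈ H p → y ∈ H q →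
      br x y = -(sgn K (p * q) • br y x))
    {a b c : ZMod 2} {u v w : P} (hu : u ∈ H a) (hv : v ∈ H b) (hw : w ∈ H c) :
    br v (m u w) = -((sgn K (a * b) * sgn K (b * c) * sgn K (a * c)) • br (m w u) v) := by
  rw [hcomm a c u w hu hw, map_smul, hskew b (c + a) v (m w u) hv (hmH c a w u hw hu),
    mul_add, sgn_add, smul_neg, smul_smul, mul_comm b a]
  module

lemma two_smul_sgn_smul_mul_br
    (hmH : ∀ (p q : ZMod 2) (x y : P), x ∈ H p → y ∈ H q → m x y ∈ H (p + q))
    (hcomm : ∀ (p q : ZMod 2) (x y : P), x ∈ H p → y ∈ H q →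
      m x y = sgn K (p * q) • m y x)
    (hskew : ∀ (p q : ZMod 2) (x y : P), x ∈ H p → y ∈ H q →
      br x y = -(sgn K (p * q) • br y x))
    (hcomp : ∀ (p q r : ZMod 2) (x y z : P), x ∈ H p → y ∈ H q → z ∈ H r →
      (2 : K) • m z (br x y) = br (m z x) y + sgn K (p * r) • br x (m z y))
    {a b c : ZMod 2} {u v w : P} (hu : u ∈ H a) (hv : v ∈ H b) (hw : w ∈ H c) :
    (2 : K) • sgn K (a * c) • m u (br v w) =
      sgn K (a * c) • br (m u v) w - sgn K (c * b) • br (m w u) v := by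
  rw [smul_comm, hcomp b c a v w u hv hw hu,
    br_mul_eq_neg_sgn_smul_br_mul hmH hcomm hskew hu hv hw, mul_comm b a, mul_comm c b]
  have hab := sgn_mul_self K (a * b)
  have hac := sgn_mul_self K (a * c)
  match_scalars
  · ring
  · linear_combination -(sgn K (b * c) * sgn K (a * c) ^ 2) * hab - sgn K (b * c) * hac

end Superalgebra

theorem stmt0_general
    {K : Type*} [Field K] [CharZero K]
    {P : Type*} [AddCommGroup P] [Module K P]
    -- ℤ₂-grading: `H p` is the subspace of homogeneous elements of parity `p`
    (H : ZMod 2 → Submodule K P)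
    -- the associative supercommutative product `m` and the Lie superbracket `br`
    (m br : P →ₗ[K] P →ₗ[K] P)
    (hmH : ∀ (p q : ZMod 2) (x y : P), x ∈ H p → y ∈ H q → m x y ∈ H (p + q))
    (hcomm : ∀ (p q : ZMod 2) (x y : P), x ∈ H p → y ∈ H q →
      m x y = sgn K (p * q) • m y x)
    (hskew : ∀ (p q : ZMod 2) (x y : P), x ∈ H p → y ∈ H q →
      br x y = -(sgn K (p * q) • br y x))
    (hcomp : ∀ (p q r : ZMod 2) (x y z : P), x ∈ H p → y ∈ H q → z ∈ H r →
      (2 : K) • m z (br x y) = br (m z x) y + sgn K (p * r) • br x (m z y)) :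
    ∀ (p q r : ZMod 2) (x y z : P), x ∈ H p → y ∈ H q → z ∈ H r →
      sgn K (p * r) • m x (br y z) + sgn K (p * q) • m y (br z x) +
        sgn K (q * r) • m z (br x y) = 0 := by
  intro p q r x y z hx hy hz
  have hxyz := two_smul_sgn_smul_mul_br hmH hcomm hskew hcomp hx hy hz
  have hyzx := two_smul_sgn_smul_mul_br hmH hcomm hskew hcomp hy hz hx
  have hzxy := two_smul_sgn_smul_mul_br hmH hcomm hskew hcomp hz hx hy
  rw [mul_comm q p] at hyzx hzxy
  rw [mul_comm r q] at hxyz hzxy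
  have htwice : (2 : K) • (sgn K (p * r) • m x (br y z) + sgn K (p * q) • m y (br z x) +
      sgn K (q * r) • m z (br x y)) = 0 := by
    rw [smul_add, smul_add, hxyz, hyzx, hzxy]
    abel
  exact (smul_eq_zero.mp htwice).resolve_left two_ne_zero

theorem stmt0
    {K : Type*} [Field K] [CharZero K]
    {P : Type*} [AddCommGroup P] [Module K P]
    -- ℤ₂-grading: `H p` is the subspace of homogeneous elements of parity `p`
    (H : ZMod 2 → Submodule K P)
    (hgrade : DirectSum.IsInternal H)
    -- the associative supercommutative product `m` and the Lie superbracket `br`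
    (m br : P →ₗ[K] P →ₗ[K] P)
    (hmH : ∀ (p q : ZMod 2) (x y : P), x ∈ H p → y ∈ H q → m x y ∈ H (p + q))
    (hbrH : ∀ (p q : ZMod 2) (x y : P), x ∈ H p → y ∈ H q → br x y ∈ H (p + q))
    (hassoc : ∀ x y z : P, m (m x y) z = m x (m y z))
    (hcomm : ∀ (p q : ZMod 2) (x y : P), x ∈ H p → y ∈ H q →
      m x y = sgn K (p * q) • m y x)
    (hskew : ∀ (p q : ZMod 2) (x y : P), x ∈ H p → y ∈ H q →
      br x y = -(sgn K (p * q) • br y x))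
    (hjac : ∀ (p q r : ZMod 2) (x y z : P), x ∈ H p → y ∈ H q → z ∈ H r →
      sgn K (p * r) • br (br x y) z + sgn K (p * q) • br (br y z) x +
        sgn K (q * r) • br (br z x) y = 0)
    (hcomp : ∀ (p q r : ZMod 2) (x y z : P), x ∈ H p → y ∈ H q → z ∈ H r →
      (2 : K) • m z (br x y) = br (m z x) y + sgn K (p * r) • br x (m z y)) :
    ∀ (p q r : ZMod 2) (x y z : P), x ∈ H p → y ∈ H q → z ∈ H r →
      sgn K (p * r) • m x (br y z) + sgn K (p * q) • m y (br z x) +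
        sgn K (q * r) • m z (br x y) = 0 :=
  stmt0_general H m br hmH hcomm hskew hcomp
end

section
/- Let 𝒫 be a transposed Poisson superalgebra over 𝕂. Then for all homogeneous h, x, y, z ∈ 𝒫: (-1)^{|x||z|}[h·x, [y,z]] + (-1)^{|x||y|}[h·y, [z,x]] + (-1)^{|y||z|}[h·z, [x,y]] = 0. -/
section

variable {K : Type*} [Field K] {P : Type*} [AddCommGroup P] [Module K P]

def IsGradedBilinear (H : ZMod 2 → Submodule K P) (f : P →ₗ[K] P →ₗ[K] P) : Prop :=
  ∀ (p q : ZMod 2) (x y : P), x ∈ H p → y ∈ H q → f x y ∈ H (p + q)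

def IsSuperSkew (H : ZMod 2 → Submodule K P) (br : P →ₗ[K] P →ₗ[K] P) : Prop :=
  ∀ (p q : ZMod 2) (x y : P), x ∈ H p → y ∈ H q → br x y = -(sgn K (p * q) • br y x)

def IsSuperJacobi (H : ZMod 2 → Submodule K P) (br : P →ₗ[K] P →ₗ[K] P) : Prop :=
  ∀ (p q r : ZMod 2) (x y z : P), x ∈ H p → y ∈ H q → z ∈ H r →
    sgn K (p * r) • br (br x y) z + sgn K (p * q) • br (br y z) x +
      sgn K (q * r) • br (br z x) y = 0

def IsTransposedCompatible (H : ZMod 2 → Submodule K P) (m br : P →ₗ[K] P →ₗ[K] P) : Prop :=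
  ∀ (p q r : ZMod 2) (x y z : P), x ∈ H p → y ∈ H q → z ∈ H r →
    (2 : K) • m z (br x y) = br (m z x) y + sgn K (p * r) • br x (m z y)

variable {H : ZMod 2 → Submodule K P} {m br : P →ₗ[K] P →ₗ[K] P}

theorem IsSuperJacobi.cyclic_sum_eq_zero (hbrH : IsGradedBilinear H br)
    (hskew : IsSuperSkew H br) (hjac : IsSuperJacobi H br) {p q r : ZMod 2} {x y z : P}
    (hx : x ∈ H p) (hy : y ∈ H q) (hz : z ∈ H r) :
    sgn K (p * r) • br x (br y z) + sgn K (p * q) • br y (br z x) +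
      sgn K (q * r) • br z (br x y) = 0 := by
  have hxy := hskew _ _ _ _ (hbrH _ _ _ _ hx hy) hz
  have hyz := hskew _ _ _ _ (hbrH _ _ _ _ hy hz) hx
  have hzx := hskew _ _ _ _ (hbrH _ _ _ _ hz hx) hy
  linear_combination (norm :=
      (match_scalars <;> fin_cases p <;> fin_cases q <;> fin_cases r <;> simp +decide [sgn]))
    -(hjac _ _ _ _ _ _ hx hy hz) + sgn K (p * r) • hxy + sgn K (p * q) • hyz +
      sgn K (q * r) • hzx

theorem outer_cyclic_sum_eq_neg_inner (hbrH : IsGradedBilinear H br)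
    (hskew : IsSuperSkew H br) (hjac : IsSuperJacobi H br)
    (hcomp : IsTransposedCompatible H m br) {s p q r : ZMod 2} {h x y z : P}
    (hh : h ∈ H s) (hx : x ∈ H p) (hy : y ∈ H q) (hz : z ∈ H r) :
    sgn K (p * r) • br (m h x) (br y z) + sgn K (p * q) • br (m h y) (br z x) +
        sgn K (q * r) • br (m h z) (br x y) =
      -((sgn K (p * r) * sgn K (p * s)) • br x (m h (br y z)) +
        (sgn K (p * q) * sgn K (q * s)) • br y (m h (br z x)) +
        (sgn K (q * r) * sgn K (r * s)) • br z (m h (br x y))) := by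
  have hjac_h := congrArg (m h) (hjac.cyclic_sum_eq_zero hbrH hskew hx hy hz)
  simp only [map_add, map_smul, map_zero] at hjac_h
  linear_combination (norm := module)
    (2 : K) • hjac_h - sgn K (p * r) • hcomp _ _ _ _ _ _ hx (hbrH _ _ _ _ hy hz) hh -
      sgn K (p * q) • hcomp _ _ _ _ _ _ hy (hbrH _ _ _ _ hz hx) hh -
      sgn K (q * r) • hcomp _ _ _ _ _ _ hz (hbrH _ _ _ _ hx hy) hh

theorem two_smul_inner_cyclic_sum_eq_neg_outer (hmH : IsGradedBilinear H m)
    (hbrH : IsGradedBilinear H br) (hskew : IsSuperSkew H br) (hjac : IsSuperJacobi H br)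
    (hcomp : IsTransposedCompatible H m br) {s p q r : ZMod 2} {h x y z : P}
    (hh : h ∈ H s) (hx : x ∈ H p) (hy : y ∈ H q) (hz : z ∈ H r) :
    (2 : K) • ((sgn K (p * r) * sgn K (p * s)) • br x (m h (br y z)) +
        (sgn K (p * q) * sgn K (q * s)) • br y (m h (br z x)) +
        (sgn K (q * r) * sgn K (r * s)) • br z (m h (br x y))) =
      -(sgn K (p * r) • br (m h x) (br y z) + sgn K (p * q) • br (m h y) (br z x) +
        sgn K (q * r) • br (m h z) (br x y)) := by
  have expand {b c : P} {i j : ZMod 2} (a : P) (hb : b ∈ H i) (hc : c ∈ H j) :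
      (2 : K) • br a (m h (br b c)) =
        br a (br (m h b) c) + sgn K (i * s) • br a (br b (m h c)) := by
    rw [← map_smul, hcomp _ _ _ _ _ _ hb hc hh, map_add, map_smul]
  have hjac_x := hjac.cyclic_sum_eq_zero hbrH hskew (hmH _ _ _ _ hh hx) hy hz
  have hjac_y := hjac.cyclic_sum_eq_zero hbrH hskew (hmH _ _ _ _ hh hy) hz hx
  have hjac_z := hjac.cyclic_sum_eq_zero hbrH hskew (hmH _ _ _ _ hh hz) hx hy
  linear_combination (norm :=
      (match_scalars <;> fin_cases s <;> fin_cases p <;> fin_cases q <;> fin_cases r <;>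
        simp +decide [sgn]))
    (sgn K (p * r) * sgn K (p * s)) • expand x hy hz +
      (sgn K (p * q) * sgn K (q * s)) • expand y hz hx +
      (sgn K (q * r) * sgn K (r * s)) • expand z hx hy +
      sgn K (r * s) • hjac_x + sgn K (p * s) • hjac_y + sgn K (q * s) • hjac_z

end

theorem stmt2_general
    {K : Type*} [Field K]
    {P : Type*} [AddCommGroup P] [Module K P]
    -- ℤ₂-grading: `H p` is the subspace of homogeneous elements of parity `p`
    (H : ZMod 2 → Submodule K P)
    -- the associative supercommutative product `m` and the Lie superbracket `br`
    (m br : P →ₗ[K] P →ₗ[K] P)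
    (hmH : ∀ (p q : ZMod 2) (x y : P), x ∈ H p → y ∈ H q → m x y ∈ H (p + q))
    (hbrH : ∀ (p q : ZMod 2) (x y : P), x ∈ H p → y ∈ H q → br x y ∈ H (p + q))
    (hskew : ∀ (p q : ZMod 2) (x y : P), x ∈ H p → y ∈ H q →
      br x y = -(sgn K (p * q) • br y x))
    (hjac : ∀ (p q r : ZMod 2) (x y z : P), x ∈ H p → y ∈ H q → z ∈ H r →
      sgn K (p * r) • br (br x y) z + sgn K (p * q) • br (br y z) x +
        sgn K (q * r) • br (br z x) y = 0)
    (hcomp : ∀ (p q r : ZMod 2) (x y z : P), x ∈ H p → y ∈ H q → z ∈ H r →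
      (2 : K) • m z (br x y) = br (m z x) y + sgn K (p * r) • br x (m z y)) :
    ∀ (s p q r : ZMod 2) (h x y z : P), h ∈ H s → x ∈ H p → y ∈ H q → z ∈ H r →
      sgn K (p * r) • br (m h x) (br y z) + sgn K (p * q) • br (m h y) (br z x) +
        sgn K (q * r) • br (m h z) (br x y) = 0 := by
  intro s p q r h x y z hh hx hy hz
  have outer_eq := outer_cyclic_sum_eq_neg_inner hbrH hskew hjac hcomp hh hx hy hz
  have inner_eq := two_smul_inner_cyclic_sum_eq_neg_outer hmH hbrH hskew hjac hcomp hh hx hy hz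
  linear_combination (norm := module) (2 : K) • outer_eq - inner_eq

theorem stmt2
    {K : Type*} [Field K] [CharZero K]
    {P : Type*} [AddCommGroup P] [Module K P]
    -- ℤ₂-grading: `H p` is the subspace of homogeneous elements of parity `p`
    (H : ZMod 2 → Submodule K P)
    (hgrade : DirectSum.IsInternal H)
    -- the associative supercommutative product `m` and the Lie superbracket `br`
    (m br : P →ₗ[K] P →ₗ[K] P)
    (hmH : ∀ (p q : ZMod 2) (x y : P), x ∈ H p → y ∈ H q → m x y ∈ H (p + q))
    (hbrH : ∀ (p q : ZMod 2) (x y : P), x ∈ H p → y ∈ H q → br x y ∈ H (p + q))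
    (hassoc : ∀ x y z : P, m (m x y) z = m x (m y z))
    (hcomm : ∀ (p q : ZMod 2) (x y : P), x ∈ H p → y ∈ H q →
      m x y = sgn K (p * q) • m y x)
    (hskew : ∀ (p q : ZMod 2) (x y : P), x ∈ H p → y ∈ H q →
      br x y = -(sgn K (p * q) • br y x))
    (hjac : ∀ (p q r : ZMod 2) (x y z : P), x ∈ H p → y ∈ H q → z ∈ H r →
      sgn K (p * r) • br (br x y) z + sgn K (p * q) • br (br y z) x +
        sgn K (q * r) • br (br z x) y = 0)
    (hcomp : ∀ (p q r : ZMod 2) (x y z : P), x ∈ H p → y ∈ H q → z ∈ H r →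
      (2 : K) • m z (br x y) = br (m z x) y + sgn K (p * r) • br x (m z y)) :
    ∀ (s p q r : ZMod 2) (h x y z : P), h ∈ H s → x ∈ H p → y ∈ H q → z ∈ H r →
      sgn K (p * r) • br (m h x) (br y z) + sgn K (p * q) • br (m h y) (br z x) +
        sgn K (q * r) • br (m h z) (br x y) = 0 :=
  stmt2_general H m br hmH hbrH hskew hjac hcomp
end

section
/- Let A = A₀ ⊕ A₁ be a supercommutative associative 𝕂-algebra and δ : A → A an odd derivation. For x, y ∈ A₁ define x∘y = x δ(y) + y δ(x) (note x∘y ∈ A₁). Then (A₁, ∘) is a Jordan algebra: ∘ is commutative and satisfies the Jordan identity (x∘x)∘(y∘x) = ((x∘x)∘y)∘x for all x, y ∈ A₁. -/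
/-- The Jordan product `x ∘ y = x δ(y) + y δ(x)` on odd elements. -/
def jmul {K : Type*} [Field K] {A : Type*} [NonUnitalRing A] [Module K A]
    (δ : A →ₗ[K] A) (x y : A) : A :=
  x * δ y + y * δ x

/-!
Write `L u = mulDeriv δ u` for the operator `a ↦ u δ(a)` (the vector field `u·δ`), so that `x ∘ y = L x y + L y x`.
For odd `u, v` the odd Leibniz rule and `u v = - v u` give the anticommutator identity
`L (u ∘ v) = L u L v + L v L u`: the terms with `δ²` cancel. Expanding both sides of the Jordan
identity with these two rules, each becomes
`2 (L x² L y + L y L x² + L x L y L x) x + 2 L x³ y`.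
-/

theorem sgn_one (K : Type*) [Field K] : sgn K 1 = -1 := by
  simp [sgn]

section MulDeriv

variable {K : Type*} [Field K] {A : Type*} [NonUnitalRing A] [Module K A] (δ : A →ₗ[K] A)

def mulDeriv (u : A) : Module.End ℤ A :=
  ((AddMonoidHom.mulLeft u).comp δ.toAddMonoidHom).toIntLinearMap

@[simp]
theorem mulDeriv_apply (u a : A) : mulDeriv δ u a = u * δ a :=
  rfl

theorem jmul_eq_mulDeriv (u v : A) : jmul δ u v = mulDeriv δ u v + mulDeriv δ v u :=
  rfl

theorem jmul_comm (u v : A) : jmul δ u v = jmul δ v u :=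
  add_comm _ _

theorem mulDeriv_jmul {u v : A} (huv : u * v = -(v * u))
    (hu : ∀ a, δ (u * a) = δ u * a - u * δ a) (hv : ∀ a, δ (v * a) = δ v * a - v * δ a) :
    mulDeriv δ (jmul δ u v) = mulDeriv δ u * mulDeriv δ v + mulDeriv δ v * mulDeriv δ u := by
  ext a
  have hδ2 : u * (v * δ (δ a)) = -(v * (u * δ (δ a))) := by
    rw [← mul_assoc, ← mul_assoc, huv, neg_mul]
  simp only [mulDeriv_apply, Module.End.mul_apply, LinearMap.add_apply, hu, hv, jmul, mul_sub,
    add_mul, mul_assoc, hδ2]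
  abel

theorem jmul_jordan {S : Set A} (hS : ∀ u ∈ S, ∀ v ∈ S, jmul δ u v ∈ S)
    (hL : ∀ u ∈ S, ∀ v ∈ S,
      mulDeriv δ (jmul δ u v) = mulDeriv δ u * mulDeriv δ v + mulDeriv δ v * mulDeriv δ u)
    {x y : A} (hx : x ∈ S) (hy : y ∈ S) :
    jmul δ (jmul δ x x) (jmul δ y x) = jmul δ (jmul δ (jmul δ x x) y) x := by
  -- each `mulDeriv δ (jmul δ _ _)` must be rewritten by `hL` before its argument is unfolded
  rw [jmul_eq_mulDeriv δ (jmul δ x x), jmul_eq_mulDeriv δ (jmul δ (jmul δ x x) y),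
    hL _ (hS x hx x hx) y hy, jmul_eq_mulDeriv δ (jmul δ x x) y, hL y hy x hx, hL x hx x hx,
    jmul_eq_mulDeriv δ x x, jmul_eq_mulDeriv δ y x]
  simp only [Module.End.mul_apply, LinearMap.add_apply, map_add]
  abel

end MulDeriv

theorem stmt9_general
    {K : Type*} [Field K]
    {A : Type*} [NonUnitalRing A] [Module K A]
    -- ℤ₂-grading: `H p` is the subspace of homogeneous elements of parity `p`
    (H : ZMod 2 → Submodule K A)
    (hmulH : ∀ (p q : ZMod 2) (x y : A), x ∈ H p → y ∈ H q → x * y ∈ H (p + q))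
    (hcomm : ∀ (p q : ZMod 2) (x y : A), x ∈ H p → y ∈ H q →
      x * y = sgn K (p * q) • (y * x))
    -- an odd derivation `δ`
    (δ : A →ₗ[K] A)
    (hδH : ∀ (p : ZMod 2) (x : A), x ∈ H p → δ x ∈ H (p + 1))
    (hLeib : ∀ (p : ZMod 2) (x : A), x ∈ H p → ∀ y : A,
      δ (x * y) = δ x * y + sgn K p • (x * δ y)) :
    -- `(A₁, jmul)` is a Jordan algebra:
    (∀ x y : A, x ∈ H 1 → y ∈ H 1 → jmul δ x y ∈ H 1) ∧
    (∀ x y : A, x ∈ H 1 → y ∈ H 1 → jmul δ x y = jmul δ y x) ∧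
    (∀ x y : A, x ∈ H 1 → y ∈ H 1 →
      jmul δ (jmul δ x x) (jmul δ y x) = jmul δ (jmul δ (jmul δ x x) y) x) := by
  have hmul_δ_mem : ∀ u ∈ H 1, ∀ v ∈ H 1, u * δ v ∈ H 1 := fun u hu v hv =>
    hmulH 1 0 u (δ v) hu (hδH 1 v hv)
  have hmem : ∀ u ∈ H 1, ∀ v ∈ H 1, jmul δ u v ∈ H 1 := fun u hu v hv =>
    add_mem (hmul_δ_mem u hu v hv) (hmul_δ_mem v hv u hu)
  have hodd_Leib : ∀ u ∈ H 1, ∀ a, δ (u * a) = δ u * a - u * δ a := fun u hu a => by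
    rw [hLeib 1 u hu a, sgn_one, neg_one_smul, sub_eq_add_neg]
  have hL : ∀ u ∈ H 1, ∀ v ∈ H 1, mulDeriv δ (jmul δ u v) =
      mulDeriv δ u * mulDeriv δ v + mulDeriv δ v * mulDeriv δ u := fun u hu v hv =>
    mulDeriv_jmul δ (by rw [hcomm 1 1 u v hu hv, mul_one, sgn_one, neg_one_smul])
      (hodd_Leib u hu) (hodd_Leib v hv)
  exact ⟨fun x y hx hy => hmem x hx y hy, fun x y _ _ => jmul_comm δ x y,
    fun x y hx hy => jmul_jordan δ hmem hL hx hy⟩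

theorem stmt9
    {K : Type*} [Field K] [CharZero K]
    {A : Type*} [NonUnitalRing A] [Module K A] [SMulCommClass K A A] [IsScalarTower K A A]
    -- ℤ₂-grading: `H p` is the subspace of homogeneous elements of parity `p`
    (H : ZMod 2 → Submodule K A)
    (hgrade : DirectSum.IsInternal H)
    (hmulH : ∀ (p q : ZMod 2) (x y : A), x ∈ H p → y ∈ H q → x * y ∈ H (p + q))
    (hcomm : ∀ (p q : ZMod 2) (x y : A), x ∈ H p → y ∈ H q →
      x * y = sgn K (p * q) • (y * x))
    -- an odd derivation `δ`
    (δ : A →ₗ[K] A)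
    (hδH : ∀ (p : ZMod 2) (x : A), x ∈ H p → δ x ∈ H (p + 1))
    (hLeib : ∀ (p : ZMod 2) (x : A), x ∈ H p → ∀ y : A,
      δ (x * y) = δ x * y + sgn K p • (x * δ y)) :
    -- `(A₁, jmul)` is a Jordan algebra:
    (∀ x y : A, x ∈ H 1 → y ∈ H 1 → jmul δ x y ∈ H 1) ∧
    (∀ x y : A, x ∈ H 1 → y ∈ H 1 → jmul δ x y = jmul δ y x) ∧
    (∀ x y : A, x ∈ H 1 → y ∈ H 1 →
      jmul δ (jmul δ x x) (jmul δ y x) = jmul δ (jmul δ (jmul δ x x) y) x) :=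
  stmt9_general H hmulH hcomm δ hδH hLeib
end

section
/- Let A = A₀ ⊕ A₁ be a supercommutative associative 𝕂-algebra and δ : A → A an odd derivation with δ² = 0. Define β(x,y) = x δ(y) + (-1)^{(|x|+1)(|y|+1)} y δ(x) on homogeneous x, y. Then for all x ∈ A₁ and y ∈ A₀ the Jordan identity holds in the mixed case: β(β(x,x), β(y,x)) = β(β(β(x,x), y), x). -/
/-- `β(x,y) = x δ(y) + (-1)^{(|x|+1)(|y|+1)} y δ(x)` on homogeneous elements,
with the parities given as explicit arguments: the coefficient of the bracket
`{x·δ, y·δ}` of the vector fields `x·δ`, `y·δ`. -/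
def betab {K : Type*} [Field K] {A : Type*} [NonUnitalRing A] [Module K A]
    (δ : A →ₗ[K] A) (x : A) (p : ZMod 2) (y : A) (q : ZMod 2) : A :=
  x * δ y + sgn K ((p + 1) * (q + 1)) • (y * δ x)

section OddDerivation

variable {K A : Type*} [Field K] [NonUnitalRing A] [Module K A]

theorem betab_one_left (δ : A →ₗ[K] A) (x y : A) (q : ZMod 2) :
    betab δ x 1 y q = x * δ y + y * δ x := by
  simp [betab, sgn, show (1 : ZMod 2) + 1 = 0 from rfl]

theorem betab_one_right (δ : A →ₗ[K] A) (x y : A) (p : ZMod 2) :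
    betab δ x p y 1 = x * δ y + y * δ x := by
  simp [betab, sgn, show (1 : ZMod 2) + 1 = 0 from rfl]

variable {H : ZMod 2 → Submodule K A} {δ : A →ₗ[K] A}
  (hLeib : ∀ (p : ZMod 2) (x : A), x ∈ H p → ∀ y : A,
    δ (x * y) = δ x * y + sgn K p • (x * δ y))
include hLeib

theorem map_mul_of_map_eq_zero {p : ZMod 2} {x z : A} (hx : x ∈ H p) (hz : δ z = 0) :
    δ (x * z) = δ x * z := by
  rw [hLeib p x hx, hz, mul_zero, smul_zero, add_zero]

theorem map_map_mul_of_map_eq_zero (hδH : ∀ (p : ZMod 2) (x : A), x ∈ H p → δ x ∈ H (p + 1))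
    (hδ2 : ∀ a : A, δ (δ a) = 0) {p : ZMod 2} {x z : A} (hx : x ∈ H p) (hz : δ z = 0) :
    δ (δ x * z) = 0 := by
  rw [map_mul_of_map_eq_zero hLeib (hδH p x hx) hz, hδ2, zero_mul]

end OddDerivation

theorem stmt10_general
    {K : Type*} [Field K]
    {A : Type*} [NonUnitalRing A] [Module K A]
    -- ℤ₂-grading: `H p` is the subspace of homogeneous elements of parity `p`
    (H : ZMod 2 → Submodule K A)
    -- an odd derivation `δ`
    (δ : A →ₗ[K] A)
    (hδH : ∀ (p : ZMod 2) (x : A), x ∈ H p → δ x ∈ H (p + 1))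
    (hLeib : ∀ (p : ZMod 2) (x : A), x ∈ H p → ∀ y : A,
      δ (x * y) = δ x * y + sgn K p • (x * δ y))
    (hδ2 : ∀ a : A, δ (δ a) = 0) :
    ∀ x y : A, x ∈ H 1 → y ∈ H 0 →
      betab δ (betab δ x 1 x 1) 1 (betab δ y 0 x 1) 0 =
        betab δ (betab δ (betab δ x 1 x 1) 1 y 0) 0 x 1 := by
  intro x y hx hy
  have hab : δ (δ x * δ y) = 0 := map_map_mul_of_map_eq_zero hLeib hδH hδ2 hx (hδ2 y)
  have haa : δ (δ x * δ x) = 0 := map_map_mul_of_map_eq_zero hLeib hδH hδ2 hx (hδ2 x)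
  have hxa := map_mul_of_map_eq_zero hLeib hx (hδ2 x)
  have hxb := map_mul_of_map_eq_zero hLeib hx (hδ2 y)
  have hya := map_mul_of_map_eq_zero hLeib hy (hδ2 x)
  have hxab := map_mul_of_map_eq_zero hLeib hx hab
  have hyaa := map_mul_of_map_eq_zero hLeib hy haa
  simp only [betab_one_left, betab_one_right, map_add, hxa, hxb, hya]
  simp only [add_mul, mul_add, mul_assoc, map_add, hxab, hyaa]
  abel

theorem stmt10
    {K : Type*} [Field K] [CharZero K]
    {A : Type*} [NonUnitalRing A] [Module K A] [SMulCommClass K A A] [IsScalarTower K A A]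
    -- ℤ₂-grading: `H p` is the subspace of homogeneous elements of parity `p`
    (H : ZMod 2 → Submodule K A)
    (hgrade : DirectSum.IsInternal H)
    (hmulH : ∀ (p q : ZMod 2) (x y : A), x ∈ H p → y ∈ H q → x * y ∈ H (p + q))
    (hcomm : ∀ (p q : ZMod 2) (x y : A), x ∈ H p → y ∈ H q →
      x * y = sgn K (p * q) • (y * x))
    -- an odd derivation `δ`
    (δ : A →ₗ[K] A)
    (hδH : ∀ (p : ZMod 2) (x : A), x ∈ H p → δ x ∈ H (p + 1))
    (hLeib : ∀ (p : ZMod 2) (x : A), x ∈ H p → ∀ y : A,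
      δ (x * y) = δ x * y + sgn K p • (x * δ y))
    (hδ2 : ∀ a : A, δ (δ a) = 0) :
    ∀ x y : A, x ∈ H 1 → y ∈ H 0 →
      betab δ (betab δ x 1 x 1) 1 (betab δ y 0 x 1) 0 =
        betab δ (betab δ (betab δ x 1 x 1) 1 y 0) 0 x 1 :=
  stmt10_general H δ hδH hLeib hδ2
end

section
/- Let 𝒫 be a transposed Poisson superalgebra over 𝕂 and let D : 𝒫 → 𝒫 be an even derivation of the Lie superalgebra (𝒫, [,]), i.e. a 𝕂-linear parity-preserving map with D([x,y]) = [D(x), y] + [x, D(y)]. Then for all homogeneous x, y, z ∈ 𝒫: D(x)·D([y,z]) + (-1)^{|x|(|y|+|z|)} D(y)·D([z,x]) + (-1)^{(|x|+|y|)|z|} D(z)·D([x,y]) + x·[D(y), D(z)] + (-1)^{|x|(|y|+|z|)} y·[D(z), D(x)] + (-1)^{(|x|+|y|)|z|} z·[D(x), D(y)] = 0. -/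
/-!
Every transposed Poisson superalgebra satisfies the super-cyclic identity
`a·[b,c] + ± b·[c,a] + ± c·[a,b] = 0`: the compatibility condition written for the three cyclic
rotations of `(a, b, c)` expresses twice each term through brackets `[u·v, w]`, and these cancel in
pairs by supercommutativity and skew-symmetry; one then divides by `2`.

Expanding `D[y,z]`, `D[z,x]`, `D[x,y]` with the derivation rule, the nine terms of the claimed sum
regroup into the cyclic identity for the triples `(Dx, Dy, z)`, `(Dx, y, Dz)` and `(x, Dy, Dz)`.
-/

theorem cyclic_sum_mul_bracket_eq_zero {K : Type*} [Field K] [NeZero (2 : K)]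
    {P : Type*} [AddCommGroup P] [Module K P]
    (H : ZMod 2 → Submodule K P) (m br : P →ₗ[K] P →ₗ[K] P)
    (hmH : ∀ (p q : ZMod 2) (x y : P), x ∈ H p → y ∈ H q → m x y ∈ H (p + q))
    (hcomm : ∀ (p q : ZMod 2) (x y : P), x ∈ H p → y ∈ H q →
      m x y = sgn K (p * q) • m y x)
    (hskew : ∀ (p q : ZMod 2) (x y : P), x ∈ H p → y ∈ H q →
      br x y = -(sgn K (p * q) • br y x))
    (hcomp : ∀ (p q r : ZMod 2) (x y z : P), x ∈ H p → y ∈ H q → z ∈ H r →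
      (2 : K) • m z (br x y) = br (m z x) y + sgn K (p * r) • br x (m z y))
    {p q r : ZMod 2} {a b c : P} (ha : a ∈ H p) (hb : b ∈ H q) (hc : c ∈ H r) :
    m a (br b c) + sgn K (p * (q + r)) • m b (br c a) +
      sgn K ((p + q) * r) • m c (br a b) = 0 := by
  have h₁ := hcomp q r p b c a hb hc ha
  have h₂ := hcomp r p q c a b hc ha hb
  have h₃ := hcomp p q r a b c ha hb hc
  -- bring every bracket to one of the forms `[a·b, c]`, `[b·c, a]`, `[a·c, b]`
  rw [hskew q (p + r) b _ hb (hmH p r a c ha hc)] at h₁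
  rw [hcomm q p b a hb ha, map_smul, hskew r (p + q) c _ hc (hmH p q a b ha hb)] at h₂
  rw [hcomm r p c a hc ha, hcomm r q c b hc hb, map_smul, map_smul, LinearMap.smul_apply,
    hskew p (q + r) a _ ha (hmH q r b c hb hc)] at h₃
  refine (smul_eq_zero.mp ?_).resolve_left (two_ne_zero (α := K))
  linear_combination (norm := match_scalars)
    h₁ + sgn K (p * (q + r)) • h₂ + sgn K ((p + q) * r) • h₃
  all_goals fin_cases p <;> fin_cases q <;> fin_cases r <;> simp +decide [sgn]

theorem stmt12_general
    {K : Type*} [Field K] [CharZero K]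
    {P : Type*} [AddCommGroup P] [Module K P]
    -- ℤ₂-grading: `H p` is the subspace of homogeneous elements of parity `p`
    (H : ZMod 2 → Submodule K P)
    -- the associative supercommutative product `m` and the Lie superbracket `br`
    (m br : P →ₗ[K] P →ₗ[K] P)
    (hmH : ∀ (p q : ZMod 2) (x y : P), x ∈ H p → y ∈ H q → m x y ∈ H (p + q))
    (hcomm : ∀ (p q : ZMod 2) (x y : P), x ∈ H p → y ∈ H q →
      m x y = sgn K (p * q) • m y x)
    (hskew : ∀ (p q : ZMod 2) (x y : P), x ∈ H p → y ∈ H q →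
      br x y = -(sgn K (p * q) • br y x))
    (hcomp : ∀ (p q r : ZMod 2) (x y z : P), x ∈ H p → y ∈ H q → z ∈ H r →
      (2 : K) • m z (br x y) = br (m z x) y + sgn K (p * r) • br x (m z y))
    -- an even derivation of the Lie superalgebra `(P, br)`
    (D : P →ₗ[K] P)
    (hDH : ∀ (p : ZMod 2) (x : P), x ∈ H p → D x ∈ H p)
    (hDbr : ∀ x y : P, D (br x y) = br (D x) y + br x (D y)) :
    ∀ (p q r : ZMod 2) (x y z : P), x ∈ H p → y ∈ H q → z ∈ H r →
      m (D x) (D (br y z)) + sgn K (p * (q + r)) • m (D y) (D (br z x)) +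
        sgn K ((p + q) * r) • m (D z) (D (br x y)) +
        m x (br (D y) (D z)) + sgn K (p * (q + r)) • m y (br (D z) (D x)) +
        sgn K ((p + q) * r) • m z (br (D x) (D y)) = 0 := by
  intro p q r x y z hx hy hz
  have cyclic {a b c : P} (ha : a ∈ H p) (hb : b ∈ H q) (hc : c ∈ H r) :=
    cyclic_sum_mul_bracket_eq_zero H m br hmH hcomm hskew hcomp ha hb hc
  rw [hDbr y z, hDbr z x, hDbr x y, map_add, map_add, map_add]
  linear_combination (norm := module) cyclic (hDH p x hx) (hDH q y hy) hz +
    cyclic (hDH p x hx) hy (hDH r z hz) + cyclic hx (hDH q y hy) (hDH r z hz)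

theorem stmt12
    {K : Type*} [Field K] [CharZero K]
    {P : Type*} [AddCommGroup P] [Module K P]
    -- ℤ₂-grading: `H p` is the subspace of homogeneous elements of parity `p`
    (H : ZMod 2 → Submodule K P)
    (hgrade : DirectSum.IsInternal H)
    -- the associative supercommutative product `m` and the Lie superbracket `br`
    (m br : P →ₗ[K] P →ₗ[K] P)
    (hmH : ∀ (p q : ZMod 2) (x y : P), x ∈ H p → y ∈ H q → m x y ∈ H (p + q))
    (hbrH : ∀ (p q : ZMod 2) (x y : P), x ∈ H p → y ∈ H q → br x y ∈ H (p + q))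
    (hassoc : ∀ x y z : P, m (m x y) z = m x (m y z))
    (hcomm : ∀ (p q : ZMod 2) (x y : P), x ∈ H p → y ∈ H q →
      m x y = sgn K (p * q) • m y x)
    (hskew : ∀ (p q : ZMod 2) (x y : P), x ∈ H p → y ∈ H q →
      br x y = -(sgn K (p * q) • br y x))
    (hjac : ∀ (p q r : ZMod 2) (x y z : P), x ∈ H p → y ∈ H q → z ∈ H r →
      sgn K (p * r) • br (br x y) z + sgn K (p * q) • br (br y z) x +
        sgn K (q * r) • br (br z x) y = 0)
    (hcomp : ∀ (p q r : ZMod 2) (x y z : P), x ∈ H p → y ∈ H q → z ∈ H r →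
      (2 : K) • m z (br x y) = br (m z x) y + sgn K (p * r) • br x (m z y))
    -- an even derivation of the Lie superalgebra `(P, br)`
    (D : P →ₗ[K] P)
    (hDH : ∀ (p : ZMod 2) (x : P), x ∈ H p → D x ∈ H p)
    (hDbr : ∀ x y : P, D (br x y) = br (D x) y + br x (D y)) :
    ∀ (p q r : ZMod 2) (x y z : P), x ∈ H p → y ∈ H q → z ∈ H r →
      m (D x) (D (br y z)) + sgn K (p * (q + r)) • m (D y) (D (br z x)) +
        sgn K ((p + q) * r) • m (D z) (D (br x y)) +
        m x (br (D y) (D z)) + sgn K (p * (q + r)) • m y (br (D z) (D x)) +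
        sgn K ((p + q) * r) • m z (br (D x) (D y)) = 0 :=
  stmt12_general H m br hmH hcomm hskew hcomp D hDH hDbr
end

section
/- Let A be a commutative associative algebra over 𝕂 and D : A → A a derivation (D(xy) = D(x)y + x D(y)). Define [x,y] = x D(y) - y D(x). Then (A, ·, [,]) is a transposed Poisson algebra: [,] is a Lie bracket (skew-symmetric and satisfying the Jacobi identity [[x,y],z] + [[y,z],x] + [[z,x],y] = 0), and the compatibility condition 2 x [y,z] = [x y, z] + [y, x z] holds for all x, y, z ∈ A. -/
/-- The bracket `[x,y] = x D(y) - y D(x)` associated to a derivation `D`. -/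
def dbrc {K : Type*} [Field K] {A : Type*} [NonUnitalCommRing A] [Module K A]
    (D : A →ₗ[K] A) (x y : A) : A :=
  x * D y - y * D x

section DerivationBracket

variable {K : Type*} [Field K] {A : Type*} [NonUnitalCommRing A] [Module K A]
  (D : A →ₗ[K] A)

theorem dbrc_anticomm (x y : A) : dbrc D x y = -dbrc D y x := by
  simp only [dbrc, neg_sub]

variable {D}

theorem map_dbrc (hLeib : ∀ x y : A, D (x * y) = D x * y + x * D y) (x y : A) :
    D (dbrc D x y) = x * D (D y) - y * D (D x) := by
  simp only [dbrc, map_sub, hLeib]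
  -- `ring` needs a unit, so we check the identity in the unitization of `A`.
  apply Unitization.inr_injective (R := ℤ)
  simp only [Unitization.inr_sub, Unitization.inr_add, Unitization.inr_mul]
  ring

theorem dbrc_jacobi (hLeib : ∀ x y : A, D (x * y) = D x * y + x * D y) (x y z : A) :
    dbrc D (dbrc D x y) z + dbrc D (dbrc D y z) x + dbrc D (dbrc D z x) y = 0 := by
  have double_bracket : ∀ a b c : A, dbrc D (dbrc D a b) c =
      (a * D b - b * D a) * D c - c * (a * D (D b) - b * D (D a)) := fun a b c => by
    rw [dbrc, map_dbrc hLeib, dbrc]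
  rw [double_bracket, double_bracket, double_bracket]
  apply Unitization.inr_injective (R := ℤ)
  simp only [Unitization.inr_sub, Unitization.inr_add, Unitization.inr_mul, Unitization.inr_zero]
  ring

theorem dbrc_mul_left_add_dbrc_mul_left
    (hLeib : ∀ x y : A, D (x * y) = D x * y + x * D y) (x y z : A) :
    dbrc D (x * y) z + dbrc D y (x * z) = x * dbrc D y z + x * dbrc D y z := by
  simp only [dbrc, hLeib]
  apply Unitization.inr_injective (R := ℤ)
  simp only [Unitization.inr_sub, Unitization.inr_add, Unitization.inr_mul]
  ring

end DerivationBracket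

theorem stmt14_general
    {K : Type*} [Field K]
    {A : Type*} [NonUnitalCommRing A] [Module K A]
    (D : A →ₗ[K] A)
    (hLeib : ∀ x y : A, D (x * y) = D x * y + x * D y) :
    -- `(A, *, dbrc)` is a transposed Poisson algebra:
    (∀ x y : A, dbrc D x y = -dbrc D y x) ∧
    (∀ x y z : A,
      dbrc D (dbrc D x y) z + dbrc D (dbrc D y z) x + dbrc D (dbrc D z x) y = 0) ∧
    (∀ x y z : A,
      (2 : K) • (x * dbrc D y z) = dbrc D (x * y) z + dbrc D y (x * z)) :=
  ⟨dbrc_anticomm D, dbrc_jacobi hLeib, fun x y z => by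
    rw [two_smul, dbrc_mul_left_add_dbrc_mul_left hLeib]⟩

theorem stmt14
    {K : Type*} [Field K] [CharZero K]
    {A : Type*} [NonUnitalCommRing A] [Module K A] [SMulCommClass K A A]
    [IsScalarTower K A A]
    (D : A →ₗ[K] A)
    (hLeib : ∀ x y : A, D (x * y) = D x * y + x * D y) :
    -- `(A, *, dbrc)` is a transposed Poisson algebra:
    (∀ x y : A, dbrc D x y = -dbrc D y x) ∧
    (∀ x y z : A,
      dbrc D (dbrc D x y) z + dbrc D (dbrc D y z) x + dbrc D (dbrc D z x) y = 0) ∧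
    (∀ x y z : A,
      (2 : K) • (x * dbrc D y z) = dbrc D (x * y) z + dbrc D y (x * z)) :=
  stmt14_general D hLeib
end
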